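/- arXiv:2010.01374 — 7 statements merged into one kernel-verified Lean document; each statement's English description precedes it below -/
import Mathlib

section
/- Under the tree construction below, for every duplicate-free sequence s over [k] of length at most H−1 and every action a ∈ [k] with a ∉ s, the coefficient σ(s,a) satisfies γ ≤ σ(s,a) ≤ 1. -/
open scoped InnerProductSpace

open Set

/-- With `x = (1 - γ) / (2γ)` the perturbation `s x c` has size at most `x γ = (1 - γ) / 2`,
which is exactly the room between `(1 + γ) / 2` and either end of `[γ, 1]`. -/
lemma mul_div_mul_add_mem_Icc {γ s c : ℝ} (hγ0 : 0 < γ) (hγ1 : γ ≤ 1) (hs : |s| ≤ 1)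
    (hc : |c| ≤ γ) : s * ((1 - γ) / (2 * γ)) * c + (1 + γ) / 2 ∈ Icc γ 1 := by
  have hx : 0 ≤ (1 - γ) / (2 * γ) := div_nonneg (by linarith) (by linarith)
  have hbound : |s * ((1 - γ) / (2 * γ)) * c| ≤ (1 - γ) / 2 :=
    calc |s * ((1 - γ) / (2 * γ)) * c| = |s| * ((1 - γ) / (2 * γ)) * |c| := by
          rw [abs_mul, abs_mul, abs_of_nonneg hx]
      _ ≤ 1 * ((1 - γ) / (2 * γ)) * γ := by gcongr
      _ = (1 - γ) / 2 := by field_simp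
  obtain ⟨hlo, hhi⟩ := abs_le.mp hbound
  constructor <;> linarith

theorem stmt_3_general (k d H : ℕ)
    (γ : ℝ) (hγ0 : 0 < γ) (hγ14 : γ ≤ 1 / 4)
    (v : Fin k → EuclideanSpace ℝ (Fin (d - 1)))
    (hvv : ∀ a b : Fin k, a ≠ b → |(⟪v a, v b⟫_ℝ : ℝ)| ≤ γ)
    (x : ℝ) (hx : x = (1 - γ) / (2 * γ))
    (σ : List (Fin k) → Fin k → ℝ)
    (hσnil : ∀ a : Fin k, σ [] a = 1)
    (hσcons : ∀ (s : List (Fin k)) (a a' : Fin k),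
      (s ++ [a]).Nodup → (s ++ [a]).length ≤ H - 1 → a' ∉ s ++ [a] →
      σ (s ++ [a]) a' = σ s a * x * (⟪v a, v a'⟫_ℝ : ℝ) + (1 + γ) / 2) :
    ∀ s : List (Fin k), s.Nodup → s.length ≤ H - 1 →
      ∀ a : Fin k, a ∉ s → γ ≤ σ s a ∧ σ s a ≤ 1 := by
  intro s
  induction s using List.reverseRecOn with
  | nil =>
    intro _ _ a _
    rw [hσnil]
    constructor <;> linarith
  | append_singleton t b ih =>
    intro hnd hlen a ha
    obtain ⟨hbt, hndt⟩ := (List.nodup_concat t b).mp (List.concat_eq_append ▸ hnd)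
    have hσtb : σ t b ∈ Icc γ 1 :=
      ih hndt (by rw [List.length_append] at hlen; omega) b hbt
    have hba : b ≠ a := fun h => ha (by simp [h])
    rw [hσcons t b a hnd hlen ha, hx]
    exact mul_div_mul_add_mem_Icc hγ0 (by linarith) (abs_le.mpr ⟨by linarith [hσtb.1], hσtb.2⟩)
      (hvv b a hba)

/-- In the lower-bound tree construction, all recursively defined coefficients `σ(s,a)`
(for a duplicate-free sequence `s` of length at most `H−1` and an action `a ∉ s`)
lie in the interval `[γ, 1]`. -/
theorem stmt_3 (k d H : ℕ) (hk : 2 ≤ k) (hd : 2 ≤ d) (hH : 1 ≤ H)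
    (γ : ℝ) (hγ0 : 0 < γ) (hγ14 : γ ≤ 1 / 4)
    (v : Fin k → EuclideanSpace ℝ (Fin (d - 1)))
    (hv : ∀ a, ‖v a‖ = 1)
    (hvv : ∀ a b : Fin k, a ≠ b → |(⟪v a, v b⟫_ℝ : ℝ)| ≤ γ)
    (x : ℝ) (hx : x = (1 - γ) / (2 * γ))
    (σ : List (Fin k) → Fin k → ℝ)
    (hσnil : ∀ a : Fin k, σ [] a = 1)
    (hσcons : ∀ (s : List (Fin k)) (a a' : Fin k),
      (s ++ [a]).Nodup → (s ++ [a]).length ≤ H - 1 → a' ∉ s ++ [a] →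
      σ (s ++ [a]) a' = σ s a * x * (⟪v a, v a'⟫_ℝ : ℝ) + (1 + γ) / 2) :
    ∀ s : List (Fin k), s.Nodup → s.length ≤ H - 1 →
      ∀ a : Fin k, a ∉ s → γ ≤ σ s a ∧ σ s a ≤ 1 :=
  stmt_3_general k d H γ hγ0 hγ14 v hvv x hx σ hσnil hσcons
end

section
/- Under the construction below, for the initial state ⊥ (the empty sequence, of level 1) and every a ∈ [k] with a ≠ a⋆, the action gap satisfies q_1(⊥, a⋆) − q_1(⊥, a) = ε·x^{H}·(1 − ⟨v_{a⋆}, v_a⟩) ≥ 1/4. -/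
open scoped InnerProductSpace

/-- Action-gap lower bound at the initial state of the lower-bound construction: for every
action `a ≠ a⋆`, the gap `q_1(⊥, a⋆) − q_1(⊥, a)` equals `ε·x^H·(1 − ⟨v_{a⋆}, v_a⟩)` and
is at least `1/4`. -/
theorem stmt_8 (k d H : ℕ) (hk : 2 ≤ k) (hd : 2 ≤ d) (hH : 1 ≤ H)
    (γ : ℝ) (hγ0 : 0 < γ) (hγ14 : γ ≤ 1 / 4)
    (v : Fin k → EuclideanSpace ℝ (Fin (d - 1)))
    (hv : ∀ a, ‖v a‖ = 1)
    (hvv : ∀ a b : Fin k, a ≠ b → |(⟪v a, v b⟫_ℝ : ℝ)| ≤ γ)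
    (astar : Fin k)
    (x ε : ℝ) (hx : x = (1 - γ) / (2 * γ)) (hε : ε = 1 / 3 * x ^ (-(H : ℤ)))
    (c1 : ℝ) (hc1 : c1 = 1 / 2 + (1 + γ) / 2 * ∑ l ∈ Finset.Icc 1 (H - 1), x ^ l)
    -- `q1 a = q_1(⊥, a)`, the optimal action-value of action `a` at the initial state
    (q1 : Fin k → ℝ)
    (hq1 : ∀ a : Fin k, q1 a = ε * (c1 + x ^ H * (⟪v a, v astar⟫_ℝ : ℝ))) :
    ∀ a : Fin k, a ≠ astar →
      q1 astar - q1 a = ε * x ^ H * (1 - (⟪v astar, v a⟫_ℝ : ℝ)) ∧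
      1 / 4 ≤ q1 astar - q1 a := by
  intro a ha
  have hx0 : 0 < x := by
    rw [hx]
    have : 0 < 1 - γ := by linarith
    positivity
  have hip : |⟪v astar, v a⟫_ℝ| ≤ γ := hvv astar a (Ne.symm ha)
  have hself : ⟪v astar, v astar⟫_ℝ = 1 := by
    rw [real_inner_self_eq_norm_sq, hv]; norm_num
  have hcomm : ⟪v a, v astar⟫_ℝ = ⟪v astar, v a⟫_ℝ := real_inner_comm _ _
  have hεx : ε * x ^ H = 1 / 3 := by
    rw [hε, zpow_neg, zpow_natCast, mul_assoc,
      inv_mul_cancel₀ (pow_ne_zero H (ne_of_gt hx0)), mul_one]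
  have heq : q1 astar - q1 a = ε * x ^ H * (1 - ⟪v astar, v a⟫_ℝ) := by
    rw [hq1, hq1, hself, hcomm]; ring
  refine ⟨heq, ?_⟩
  rw [heq, hεx]
  have h2 : ⟪v astar, v a⟫_ℝ ≤ γ := (abs_le.mp hip).2
  nlinarith
end

section
/- Let k ≥ 2 and let n be an integer with 1 ≤ n ≤ ⌊k/4⌋. Let Ω be a measurable space equipped with measurable maps A_1, A_2, … : Ω → {1,…,k} and N : Ω → ℕ, and let P_0, P_1, …, P_k be probability measures on Ω. Assume that (i) for every a ∈ {1,…,k}, P_a(a ∉ {A_1,…,A_n}) ≥ (3/4)·P_0(a ∉ {A_1,…,A_n}), and (ii) for every a ∈ {1,…,k}, P_a(A_{N+1} ≠ a) ≤ 9/32. Then there exists a ∈ {1,…,k} such that the expectation of N under P_a satisfies E_{P_a}[N] ≥ (9/32)·n. -/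
open MeasureTheory
open scoped ENNReal NNReal

lemma stmt_10_cd (a b : ℕ) (hb : (b:ℝ≥0) ≠ 0) :
    ((a:ℝ≥0∞)/(b:ℝ≥0∞)) = (((a:ℝ≥0)/(b:ℝ≥0) : ℝ≥0) : ℝ≥0∞) := by
  rw [ENNReal.coe_div hb]; norm_num

lemma stmt_10_e1 : (3/4 : ℝ≥0∞) + 1/4 = 1 := by
  rw [ENNReal.div_add_div_same, ENNReal.div_eq_one_iff (by norm_num) (by norm_num)]
  norm_num

lemma stmt_10_e2 : (9/16 : ℝ≥0∞) = 3/4 * (3/4) := by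
  rw [show ((3:ℝ≥0∞)) = ((3:ℕ):ℝ≥0∞) by norm_num, show ((4:ℝ≥0∞)) = ((4:ℕ):ℝ≥0∞) by norm_num,
    show ((9:ℝ≥0∞)) = ((9:ℕ):ℝ≥0∞) by norm_num, show ((16:ℝ≥0∞)) = ((16:ℕ):ℝ≥0∞) by norm_num,
    stmt_10_cd _ _ (by norm_num), stmt_10_cd _ _ (by norm_num), ← ENNReal.coe_mul]
  rw [ENNReal.coe_inj, div_mul_div_comm]
  norm_num

lemma stmt_10_e3 : (9/32 : ℝ≥0∞) + 9/32 = 9/16 := by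
  norm_num [ENNReal.div_add_div_same, ENNReal.div_eq_div_iff]

lemma stmt_10_e4 : (9/32 : ℝ≥0∞) ≠ ⊤ := by
  rw [div_eq_mul_inv]
  exact ENNReal.mul_ne_top (by norm_num) (ENNReal.inv_ne_top.mpr (by norm_num))

/-- Abstract probabilistic core of the lower-bound argument: if `n ≤ ⌊k/4⌋`, each measure
`P a` puts at least `3/4` of the `P_0`-probability on the event that action `a` is not
queried in the first `n` rounds, and the planner outputs a wrong action (`A_{N+1} ≠ a`)
with `P a`-probability at most `9/32`, then some `a` forces `E_{P a}[N] ≥ (9/32)·n`. -/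
theorem stmt_10 {Ω : Type*} [MeasurableSpace Ω] (k n : ℕ) (hk : 2 ≤ k)
    (hn1 : 1 ≤ n) (hn2 : n ≤ k / 4)
    (A : ℕ → Ω → Fin k) (hA : ∀ i, Measurable (A i))
    (N : Ω → ℕ) (hN : Measurable N)
    (P0 : Measure Ω) [IsProbabilityMeasure P0]
    (P : Fin k → Measure Ω) (hP : ∀ a, IsProbabilityMeasure (P a))
    (h1 : ∀ a : Fin k,
      (3 / 4 : ℝ≥0∞) * P0 {ω | ∀ i, 1 ≤ i → i ≤ n → A i ω ≠ a}
        ≤ P a {ω | ∀ i, 1 ≤ i → i ≤ n → A i ω ≠ a})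
    (h2 : ∀ a : Fin k, P a {ω | A (N ω + 1) ω ≠ a} ≤ 9 / 32) :
    ∃ a : Fin k, (9 / 32 : ℝ≥0∞) * n ≤ ∫⁻ ω, (N ω : ℝ≥0∞) ∂(P a) := by
  set E : Fin k → Set Ω := fun a => {ω | ∀ i, 1 ≤ i → i ≤ n → A i ω ≠ a} with hE
  have hEmeas : ∀ a, MeasurableSet (E a) := by
    intro a
    have : E a = ⋂ (i : ℕ) (_ : 1 ≤ i) (_ : i ≤ n), (A i) ⁻¹' {a}ᶜ := by
      ext ω; simp [hE, Set.mem_iInter]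
    rw [this]
    exact MeasurableSet.iInter fun i => MeasurableSet.iInter fun _ =>
      MeasurableSet.iInter fun _ => (hA i) (measurableSet_singleton a).compl
  -- compl bound
  have hcompl_sub : ∀ a, (E a)ᶜ ⊆ ⋃ i ∈ Finset.Icc 1 n, (A i) ⁻¹' {a} := by
    intro a ω hω
    simp only [hE, Set.mem_compl_iff, Set.mem_setOf_eq, not_forall] at hω
    obtain ⟨i, h1i, hin, hAi⟩ := hω
    push_neg at hAi
    exact Set.mem_biUnion (Finset.mem_Icc.mpr ⟨h1i, hin⟩) hAi
  have hsum : ∑ a : Fin k, P0 ((E a)ᶜ) ≤ (n : ℝ≥0∞) := by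
    calc ∑ a : Fin k, P0 ((E a)ᶜ)
        ≤ ∑ a : Fin k, ∑ i ∈ Finset.Icc 1 n, P0 ((A i) ⁻¹' {a}) := by
          refine Finset.sum_le_sum fun a _ => ?_
          exact le_trans (measure_mono (hcompl_sub a)) (measure_biUnion_finset_le _ _)
      _ = ∑ i ∈ Finset.Icc 1 n, ∑ a : Fin k, P0 ((A i) ⁻¹' {a}) := Finset.sum_comm
      _ = ∑ i ∈ Finset.Icc 1 n, (1 : ℝ≥0∞) := by
          refine Finset.sum_congr rfl fun i _ => ?_
          rw [← measure_univ (μ := P0)]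
          rw [← measure_biUnion_finset (f := fun a : Fin k => (A i) ⁻¹' {a})]
          · congr 1
            ext ω; simp
          · intro a _ b _ hab
            exact Set.disjoint_left.mpr (fun ω ha hb => hab (by
              simp only [Set.mem_preimage, Set.mem_singleton_iff] at ha hb
              rw [← ha, ← hb]))
          · exact fun a _ => (hA i) (measurableSet_singleton a)
      _ = (n : ℝ≥0∞) := by simp
  -- find good a
  have hkn : (n : ℝ≥0∞) ≤ ∑ _a : Fin k, (1 / 4 : ℝ≥0∞) := by
    rw [Finset.sum_const, Finset.card_univ, Fintype.card_fin]
    have h4n : 4 * n ≤ k := le_trans (Nat.mul_le_mul_left 4 hn2) (Nat.mul_div_le k 4)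
    calc (n : ℝ≥0∞) = (4 * n : ℕ) * (1/4 : ℝ≥0∞) := by
          push_cast
          rw [mul_comm (4 : ℝ≥0∞), mul_assoc, one_div,
            ENNReal.mul_inv_cancel (by norm_num) (by norm_num), mul_one]
      _ ≤ (k : ℕ) * (1/4 : ℝ≥0∞) := by
          gcongr
          all_goals exact_mod_cast h4n
      _ = k • (1/4 : ℝ≥0∞) := (nsmul_eq_mul _ _).symm
  obtain ⟨a, -, hamin⟩ := Finset.exists_min_image (Finset.univ : Finset (Fin k))
    (fun a => P0 ((E a)ᶜ)) ⟨⟨0, by omega⟩, Finset.mem_univ _⟩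
  have ha : P0 ((E a)ᶜ) ≤ 1/4 := by
    have hle := Finset.card_nsmul_le_sum (Finset.univ : Finset (Fin k))
      (fun b => P0 ((E b)ᶜ)) (P0 ((E a)ᶜ)) (fun b hb => hamin b hb)
    rw [Finset.card_univ, Fintype.card_fin] at hle
    have hk' : (k : ℝ≥0∞) * P0 ((E a)ᶜ) ≤ (k : ℝ≥0∞) * (1/4) := by
      calc (k : ℝ≥0∞) * P0 ((E a)ᶜ) = k • P0 ((E a)ᶜ) := (nsmul_eq_mul _ _).symm
        _ ≤ ∑ b : Fin k, P0 ((E b)ᶜ) := hle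
        _ ≤ (n : ℝ≥0∞) := hsum
        _ ≤ ∑ _b : Fin k, (1/4 : ℝ≥0∞) := hkn
        _ = (k : ℝ≥0∞) * (1/4) := by
            rw [Finset.sum_const, Finset.card_univ, Fintype.card_fin, nsmul_eq_mul]
    exact (ENNReal.mul_le_mul_iff_right (by exact_mod_cast (by omega : k ≠ 0))
      (ENNReal.natCast_ne_top k)).mp hk'
  refine ⟨a, ?_⟩
  haveI := hP a
  -- P0 (E a) ≥ 3/4
  have hP0E : (3 / 4 : ℝ≥0∞) ≤ P0 (E a) := by
    have hadd : P0 (E a) + P0 ((E a)ᶜ) = 1 := by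
      rw [measure_add_measure_compl (hEmeas a), measure_univ]
    have h' : (3/4 : ℝ≥0∞) + (1/4) ≤ P0 (E a) + (1/4) := by
      calc (3/4 : ℝ≥0∞) + 1/4 = 1 := stmt_10_e1
        _ = P0 (E a) + P0 ((E a)ᶜ) := hadd.symm
        _ ≤ P0 (E a) + 1/4 := by gcongr
    exact (ENNReal.add_le_add_iff_right (by simp)).mp h'
  have hPaE : (9 / 16 : ℝ≥0∞) ≤ P a (E a) := by
    calc (9/16 : ℝ≥0∞) = (3/4) * (3/4) := stmt_10_e2
      _ ≤ (3/4) * P0 (E a) := by gcongr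
      _ ≤ P a (E a) := h1 a
  -- E a ⊆ {n ≤ N} ∪ Bad
  set G : Set Ω := {ω | n ≤ N ω} with hG
  have hsub : E a ⊆ G ∪ {ω | A (N ω + 1) ω ≠ a} := by
    intro ω hω
    by_cases hn : n ≤ N ω
    · exact Or.inl hn
    · exact Or.inr (hω (N ω + 1) (Nat.succ_le_succ (Nat.zero_le _)) (by omega))
  have hPaG : (9 / 32 : ℝ≥0∞) ≤ P a G := by
    have hle : (9/16 : ℝ≥0∞) ≤ P a G + 9/32 :=
      le_trans hPaE (le_trans (measure_mono hsub)
        (le_trans (measure_union_le _ _) (by gcongr; exact h2 a)))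
    have h' : (9/32 : ℝ≥0∞) + 9/32 ≤ P a G + 9/32 := by
      calc (9/32 : ℝ≥0∞) + 9/32 = 9/16 := stmt_10_e3
        _ ≤ P a G + 9/32 := hle
    exact (ENNReal.add_le_add_iff_right stmt_10_e4).mp h'
  -- conclude
  have hmarkov : (n : ℝ≥0∞) * P a G ≤ ∫⁻ ω, (N ω : ℝ≥0∞) ∂(P a) := by
    have hmeas : AEMeasurable (fun ω => (N ω : ℝ≥0∞)) (P a) :=
      (measurable_from_top.comp hN).aemeasurable
    have h := mul_meas_ge_le_lintegral₀ (μ := P a) hmeas (n : ℝ≥0∞)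
    have hGset : G = {ω | (n : ℝ≥0∞) ≤ (N ω : ℝ≥0∞)} := by
      ext ω; simp [hG, Nat.cast_le]
    rw [hGset]
    exact h
  calc (9/32 : ℝ≥0∞) * n = (n : ℝ≥0∞) * (9/32) := mul_comm _ _
    _ ≤ (n : ℝ≥0∞) * P a G := by gcongr
    _ ≤ _ := hmarkov
end

section
/- Consider a finite-horizon MDP with horizon H and rewards in [0,1], and let π be a memoryless policy. Let δ ≥ 0 and ζ ∈ (0,1]. If for every h ∈ {1,…,H} and every state s, Σ_{a∈A} 1{Δ⋆_h(s,a) ≥ δ}·π_h(a|s) ≤ ζ, then for every h and every state s, v⋆_h(s) − v^π_h(s) ≤ H·δ + ζ·H·(H+1)/2. -/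
open MeasureTheory ProbabilityTheory

/-!
Backward induction on the number `k = H + 1 - h` of remaining stages. At a state,
`v⋆_h - v^π_h` is the `π_h`-average of the action gaps plus the `π_h`-average of the expected
next-stage suboptimality. The values lie in `[0, k]`, so every gap is at most `k`, and gaps of
at least `δ` carry `π_h`-mass at most `ζ`: the first average is at most `δ + ζ k`. Summing over
the stages gives `H δ + ζ H (H + 1) / 2`. Measurability is carried along with the bounds, since
otherwise the Bochner integrals against the kernels would be junk.
-/

structure MeasurableInIcc {S : Type*} [MeasurableSpace S] (f : S → ℝ) (c : ℝ) : Prop where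
  measurable : Measurable f
  mem_Icc : ∀ s, f s ∈ Set.Icc 0 c

namespace MeasurableInIcc

variable {S : Type*} [MeasurableSpace S] {f g : S → ℝ} {c d : ℝ}

theorem integrable (hf : MeasurableInIcc f c) (μ : Measure S) [IsFiniteMeasure μ] :
    Integrable f μ :=
  .of_bound hf.measurable.aestronglyMeasurable c <| .of_forall fun s => by
    rw [Real.norm_eq_abs, abs_le]
    exact ⟨by linarith [(hf.mem_Icc s).1, (hf.mem_Icc s).2], (hf.mem_Icc s).2⟩

theorem add (hf : MeasurableInIcc f c) (hg : MeasurableInIcc g d) :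
    MeasurableInIcc (fun s => f s + g s) (c + d) where
  measurable := hf.measurable.add hg.measurable
  mem_Icc s := ⟨add_nonneg (hf.mem_Icc s).1 (hg.mem_Icc s).1,
    add_le_add (hf.mem_Icc s).2 (hg.mem_Icc s).2⟩

theorem integral_kernel {T : Type*} [MeasurableSpace T] (hf : MeasurableInIcc f c)
    (κ : Kernel T S) [IsMarkovKernel κ] : MeasurableInIcc (fun t => ∫ s, f s ∂κ t) c where
  measurable := (hf.measurable.stronglyMeasurable.integral_kernel (κ := κ)).measurable
  mem_Icc t := by
    refine ⟨integral_nonneg fun s => (hf.mem_Icc s).1, ?_⟩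
    calc ∫ s, f s ∂κ t ≤ ∫ _, c ∂κ t :=
          integral_mono (hf.integrable _) (integrable_const c) fun s => (hf.mem_Icc s).2
      _ = c := by simp

theorem sup' {A : Type*} [Fintype A] [Nonempty A] {q : S → A → ℝ}
    (hq : ∀ a, MeasurableInIcc (fun s => q s a) c) :
    MeasurableInIcc (fun s => Finset.univ.sup' Finset.univ_nonempty (q s)) c where
  measurable := by
    convert Finset.measurable_sup' Finset.univ_nonempty fun a _ => (hq a).measurable
    rw [Finset.sup'_apply]
  mem_Icc s := by
    obtain ⟨a⟩ := ‹Nonempty A›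
    exact ⟨(Finset.le_sup'_of_le _ (Finset.mem_univ a) ((hq a).mem_Icc s).1),
      Finset.sup'_le _ _ fun a _ => ((hq a).mem_Icc s).2⟩

theorem sum_mul {A : Type*} [Fintype A] {p q : S → A → ℝ}
    (hp : ∀ a, Measurable fun s => p s a) (hp0 : ∀ s a, 0 ≤ p s a) (hp1 : ∀ s, ∑ a, p s a = 1)
    (hq : ∀ a, MeasurableInIcc (fun s => q s a) c) :
    MeasurableInIcc (fun s => ∑ a, p s a * q s a) c where
  measurable := Finset.measurable_sum _ fun a _ => (hp a).mul (hq a).measurable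
  mem_Icc s := by
    refine ⟨Finset.sum_nonneg fun a _ => mul_nonneg (hp0 s a) ((hq a).mem_Icc s).1, ?_⟩
    calc ∑ a, p s a * q s a ≤ ∑ a, p s a * c :=
          Finset.sum_le_sum fun a _ => mul_le_mul_of_nonneg_left ((hq a).mem_Icc s).2 (hp0 s a)
      _ = c := by rw [← Finset.sum_mul, hp1, one_mul]

end MeasurableInIcc

theorem sum_mul_le_of_sum_ite_le {A : Type*} [Fintype A] {p g : A → ℝ} {δ ζ M : ℝ}
    (hp0 : ∀ a, 0 ≤ p a) (hp1 : ∑ a, p a = 1) (hδ : 0 ≤ δ) (hM : 0 ≤ M) (hgM : ∀ a, g a ≤ M)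
    (hmass : ∑ a, (if δ ≤ g a then p a else 0) ≤ ζ) :
    ∑ a, p a * g a ≤ δ + ζ * M := by
  have hterm : ∀ a, p a * g a ≤ (if δ ≤ g a then p a else 0) * M + p a * δ := fun a => by
    split_ifs with hg
    · nlinarith [hp0 a, hgM a]
    · nlinarith [hp0 a]
  calc ∑ a, p a * g a ≤ ∑ a, ((if δ ≤ g a then p a else 0) * M + p a * δ) :=
        Finset.sum_le_sum fun a _ => hterm a
    _ = (∑ a, if δ ≤ g a then p a else 0) * M + δ := by
        rw [Finset.sum_add_distrib, ← Finset.sum_mul, ← Finset.sum_mul, hp1, one_mul]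
    _ ≤ δ + ζ * M := by nlinarith

theorem bellman_sub_le_of_sum_ite_le {A S : Type*} [Fintype A] [MeasurableSpace S]
    {μ : A → Measure S} [∀ a, IsProbabilityMeasure (μ a)] {ρ p q : A → ℝ} {V W : S → ℝ}
    {v w δ ζ M B : ℝ} (hp0 : ∀ a, 0 ≤ p a) (hp1 : ∑ a, p a = 1)
    (hV : ∀ a, Integrable V (μ a)) (hW : ∀ a, Integrable W (μ a)) (hVW : ∀ x, V x - W x ≤ B)
    (hq : ∀ a, q a = ρ a + ∫ x, V x ∂μ a) (hw : w = ∑ a, p a * (ρ a + ∫ x, W x ∂μ a))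
    (hδ : 0 ≤ δ) (hM : 0 ≤ M) (hgap : ∀ a, v - q a ≤ M)
    (hmass : ∑ a, (if δ ≤ v - q a then p a else 0) ≤ ζ) :
    v - w ≤ δ + ζ * M + B := by
  have hsplit : v - w = ∑ a, p a * (v - q a) + ∑ a, p a * ∫ x, V x - W x ∂μ a :=
    calc v - w = ∑ a, (p a * v - p a * (ρ a + ∫ x, W x ∂μ a)) := by
          rw [Finset.sum_sub_distrib, ← Finset.sum_mul, hp1, one_mul, hw]
      _ = ∑ a, (p a * (v - q a) + p a * ∫ x, V x - W x ∂μ a) :=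
          Finset.sum_congr rfl fun a _ => by rw [hq, integral_sub (hV a) (hW a)]; ring
      _ = _ := Finset.sum_add_distrib
  have hnext : ∑ a, p a * ∫ x, V x - W x ∂μ a ≤ B :=
    calc ∑ a, p a * ∫ x, V x - W x ∂μ a ≤ ∑ a, p a * B := by
          refine Finset.sum_le_sum fun a _ => mul_le_mul_of_nonneg_left ?_ (hp0 a)
          calc ∫ x, V x - W x ∂μ a ≤ ∫ _, B ∂μ a :=
                integral_mono ((hV a).sub (hW a)) (integrable_const B) hVW
            _ = B := by simp
      _ = B := by rw [← Finset.sum_mul, hp1, one_mul]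
  linarith [sum_mul_le_of_sum_ite_le hp0 hp1 hδ hM hgap hmass]

theorem bellman_step_bounds {S A : Type*} [MeasurableSpace S] [Fintype A] [Nonempty A]
    {P : A → Kernel S S} [∀ a, IsMarkovKernel (P a)] {r π Q : S → A → ℝ}
    {V' W' V W : S → ℝ} {k B δ ζ : ℝ}
    (hr : ∀ a, MeasurableInIcc (fun s => r s a) 1)
    (hπ : ∀ a, Measurable fun s => π s a) (hπ0 : ∀ s a, 0 ≤ π s a)
    (hπ1 : ∀ s, ∑ a, π s a = 1) (hk : 0 ≤ k) (hδ : 0 ≤ δ)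
    (hV' : MeasurableInIcc V' k) (hW' : MeasurableInIcc W' k) (hVW' : ∀ s, V' s - W' s ≤ B)
    (hQ : ∀ s a, Q s a = r s a + ∫ s', V' s' ∂(P a s))
    (hV : ∀ s, V s = Finset.univ.sup' Finset.univ_nonempty fun a => Q s a)
    (hW : ∀ s, W s = ∑ a, π s a * (r s a + ∫ s', W' s' ∂(P a s)))
    (hmass : ∀ s, ∑ a, (if δ ≤ V s - Q s a then π s a else 0) ≤ ζ) :
    MeasurableInIcc V (k + 1) ∧ MeasurableInIcc W (k + 1) ∧
      ∀ s, V s - W s ≤ δ + ζ * (k + 1) + B := by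
  have hQa : ∀ a, MeasurableInIcc (fun s => Q s a) (k + 1) := fun a => by
    simpa only [hQ, add_comm (1 : ℝ)] using (hr a).add (hV'.integral_kernel (P a))
  have hVk : MeasurableInIcc V (k + 1) := by
    simpa only [← hV] using MeasurableInIcc.sup' hQa
  have hWk : MeasurableInIcc W (k + 1) := by
    simpa only [← hW, add_comm (1 : ℝ)] using
      MeasurableInIcc.sum_mul hπ hπ0 hπ1 fun a => (hr a).add (hW'.integral_kernel (P a))
  refine ⟨hVk, hWk, fun s => ?_⟩
  refine bellman_sub_le_of_sum_ite_le (hπ0 s) (hπ1 s) (fun a => hV'.integrable _)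
    (fun a => hW'.integrable _) hVW' (hQ s) (hW s) hδ (by linarith) (fun a => ?_) (hmass s)
  linarith [(hVk.mem_Icc s).2, ((hQa a).mem_Icc s).1]

theorem stmt_11_general {S : Type*} [MeasurableSpace S] {A : Type*} [Fintype A] [Nonempty A]
    (H : ℕ)
    (P : A → Kernel S S) (hP : ∀ a, IsMarkovKernel (P a))
    (r : S → A → ℝ) (hrmeas : ∀ a, Measurable fun s => r s a)
    (hr0 : ∀ s a, 0 ≤ r s a) (hr1 : ∀ s a, r s a ≤ 1)
    -- optimal value functions, defined by backward recursion
    (vstar : ℕ → S → ℝ) (qstar : ℕ → S → A → ℝ)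
    (hvend : ∀ s, vstar (H + 1) s = 0)
    (hq : ∀ h, 1 ≤ h → h ≤ H → ∀ s a,
      qstar h s a = r s a + ∫ s', vstar (h + 1) s' ∂(P a s))
    (hv : ∀ h, 1 ≤ h → h ≤ H → ∀ s,
      vstar h s = Finset.univ.sup' Finset.univ_nonempty fun a => qstar h s a)
    -- a memoryless policy and its value functions
    (π : ℕ → S → A → ℝ) (hπmeas : ∀ h a, Measurable fun s => π h s a)
    (hπ0 : ∀ h s a, 0 ≤ π h s a) (hπ1 : ∀ h s, ∑ a, π h s a = 1)
    (vpi : ℕ → S → ℝ)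
    (hvpiend : ∀ s, vpi (H + 1) s = 0)
    (hvpi : ∀ h, 1 ≤ h → h ≤ H → ∀ s,
      vpi h s = ∑ a, π h s a * (r s a + ∫ s', vpi (h + 1) s' ∂(P a s)))
    (δ ζ : ℝ) (hδ : 0 ≤ δ) (hζ0 : 0 < ζ)
    -- (δ, ζ)-transition-soundness
    (hsound : ∀ h, 1 ≤ h → h ≤ H → ∀ s,
      ∑ a, (if δ ≤ vstar h s - qstar h s a then π h s a else 0) ≤ ζ) :
    ∀ h, 1 ≤ h → h ≤ H → ∀ s,
      vstar h s - vpi h s ≤ H * δ + ζ * (H * (H + 1) / 2) := by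
  have hr : ∀ a, MeasurableInIcc (fun s => r s a) 1 :=
    fun a => ⟨hrmeas a, fun s => ⟨hr0 s a, hr1 s a⟩⟩
  have hbackward : ∀ k h, 1 ≤ h → h + k = H + 1 →
      MeasurableInIcc (vstar h) k ∧ MeasurableInIcc (vpi h) k ∧
        ∀ s, vstar h s - vpi h s ≤ k * δ + ζ * (k * (k + 1) / 2) := by
    intro k
    induction k with
    | zero =>
      rintro h - hh
      obtain rfl : h = H + 1 := by omega
      simp only [funext hvend, funext hvpiend]
      exact ⟨⟨measurable_const, fun _ => by simp⟩, ⟨measurable_const, fun _ => by simp⟩,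
        fun _ => by simp⟩
    | succ k ih =>
      intro h h1 hh
      have hhH : h ≤ H := by omega
      obtain ⟨hV', hW', hgap'⟩ := ih (h + 1) (by omega) (by omega)
      obtain ⟨hV, hW, hgap⟩ := bellman_step_bounds hr (hπmeas h) (hπ0 h) (hπ1 h) k.cast_nonneg hδ
        hV' hW' hgap' (hq h h1 hhH) (hv h h1 hhH) (hvpi h h1 hhH) (hsound h h1 hhH)
      push_cast
      exact ⟨hV, hW, fun s => (hgap s).trans_eq (by ring)⟩
  intro h h1 hhH s
  obtain ⟨-, -, hgap⟩ := hbackward (H + 1 - h) h h1 (by omega)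
  have hk : ((H + 1 - h : ℕ) : ℝ) ≤ H := by exact_mod_cast (by omega)
  refine (hgap s).trans ?_
  gcongr

/-- Transition-soundness implies soundness: in a finite-horizon MDP with horizon `H` and
rewards in `[0,1]`, if a memoryless policy `π` puts probability at most `ζ` on actions with
action gap at least `δ` at every stage and state, then its suboptimality is at most
`H·δ + ζ·H·(H+1)/2` at every stage and state. -/
theorem stmt_11 {S : Type*} [MeasurableSpace S] {A : Type*} [Fintype A] [Nonempty A]
    (H : ℕ) (hH : 1 ≤ H)
    (P : A → Kernel S S) (hP : ∀ a, IsMarkovKernel (P a))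
    (r : S → A → ℝ) (hrmeas : ∀ a, Measurable fun s => r s a)
    (hr0 : ∀ s a, 0 ≤ r s a) (hr1 : ∀ s a, r s a ≤ 1)
    -- optimal value functions, defined by backward recursion
    (vstar : ℕ → S → ℝ) (qstar : ℕ → S → A → ℝ)
    (hvend : ∀ s, vstar (H + 1) s = 0)
    (hq : ∀ h, 1 ≤ h → h ≤ H → ∀ s a,
      qstar h s a = r s a + ∫ s', vstar (h + 1) s' ∂(P a s))
    (hv : ∀ h, 1 ≤ h → h ≤ H → ∀ s,
      vstar h s = Finset.univ.sup' Finset.univ_nonempty fun a => qstar h s a)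
    -- a memoryless policy and its value functions
    (π : ℕ → S → A → ℝ) (hπmeas : ∀ h a, Measurable fun s => π h s a)
    (hπ0 : ∀ h s a, 0 ≤ π h s a) (hπ1 : ∀ h s, ∑ a, π h s a = 1)
    (vpi : ℕ → S → ℝ)
    (hvpiend : ∀ s, vpi (H + 1) s = 0)
    (hvpi : ∀ h, 1 ≤ h → h ≤ H → ∀ s,
      vpi h s = ∑ a, π h s a * (r s a + ∫ s', vpi (h + 1) s' ∂(P a s)))
    (δ ζ : ℝ) (hδ : 0 ≤ δ) (hζ0 : 0 < ζ) (hζ1 : ζ ≤ 1)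
    -- (δ, ζ)-transition-soundness
    (hsound : ∀ h, 1 ≤ h → h ≤ H → ∀ s,
      ∑ a, (if δ ≤ vstar h s - qstar h s a then π h s a else 0) ≤ ζ) :
    ∀ h, 1 ≤ h → h ≤ H → ∀ s,
      vstar h s - vpi h s ≤ H * δ + ζ * (H * (H + 1) / 2) :=
  stmt_11_general H P hP r hrmeas hr0 hr1 vstar qstar hvend hq hv π hπmeas hπ0 hπ1 vpi hvpiend hvpi
    δ ζ hδ hζ0 hsound
end

section
/- Let X be a nonempty set and φ : X → ℝ^d a map such that the image φ(X) is compact and spans ℝ^d. Then there exists a finitely supported probability distribution ρ on X whose support has at most 4d·log(log d) + 16 points, such that the matrix G(ρ) = Σ_{x ∈ supp(ρ)} ρ(x)·φ(x)·φ(x)ᵀ is invertible, and such that the following holds: for all ε ≥ 0, δ ≥ 0, all θ⋆ ∈ ℝ^d, and all functions μ, r : X → ℝ satisfying |μ(x) − ⟨φ(x), θ⋆⟩| ≤ ε for all x ∈ X and |r(x) − μ(x)| ≤ δ for all x ∈ supp(ρ), the least-squares estimator θ̂ = G(ρ)^{−1}·Σ_{x ∈ supp(ρ)} ρ(x)·r(x)·φ(x)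 satisfies sup_{x ∈ X} |⟨φ(x), θ̂⟩ − μ(x)| ≤ ε + (ε + δ)·√(2d). -/
open Matrix Finset

/-!
Pick `2d + 1` points `vᵢ` of the compact set `φ(X)` maximising `det A`, `A = ∑ vᵢ vᵢᵀ`. Exchanging
any `vᵢ` for a point `x` of `φ(X)` cannot increase the determinant; by the rank-two matrix
determinant lemma this bounds `xᵀ A⁻¹ x` against `vᵢᵀ A⁻¹ vᵢ` and `(xᵀ A⁻¹ vᵢ)²`, and summing
over `i` (with `∑ vᵢᵀ A⁻¹ vᵢ = d` and `∑ (xᵀ A⁻¹ vᵢ)² = xᵀ A⁻¹ x`) gives `(d + 2) xᵀ A⁻¹ x ≤ d`.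
The empirical distribution of the `vᵢ` has design matrix `G = A / (2d + 1)`, so
`φ(x)ᵀ G⁻¹ φ(x) ≤ 2d` on all of `X`. The estimator's error at `x` is `⟨φ x, θ⋆⟩ - μ x` plus
`∑ ρ(y) (r y - ⟨φ y, θ⋆⟩) φ(x)ᵀ G⁻¹ φ(y)`, and Jensen bounds `∑ ρ(y) |φ(x)ᵀ G⁻¹ φ(y)|` by
`√(φ(x)ᵀ G⁻¹ φ(x))`.
-/

namespace Matrix

variable {n R : Type*} [Fintype n] [DecidableEq n] [CommRing R]

theorem det_add_vecMulVec_sub_vecMulVec {A : Matrix n n R} (hA : IsUnit A.det) (x v : n → R) :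
    (A + vecMulVec x x - vecMulVec v v).det =
      A.det * ((1 + x ⬝ᵥ (A⁻¹ *ᵥ x)) * (1 - v ⬝ᵥ (A⁻¹ *ᵥ v)) +
        (x ⬝ᵥ (A⁻¹ *ᵥ v)) * (v ⬝ᵥ (A⁻¹ *ᵥ x))) := by
  let U : Matrix n (Fin 2) R := (of ![x, v])ᵀ
  let V : Matrix (Fin 2) n R := of ![x, -v]
  have hUV : U * V = vecMulVec x x - vecMulVec v v := by
    ext i k
    simp [U, V, mul_apply, Fin.sum_univ_two, vecMulVec_apply, sub_eq_add_neg]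
  have hentry (i j : Fin 2) : (V * A⁻¹ * U) i j = ![x, -v] i ⬝ᵥ (A⁻¹ *ᵥ ![x, v] j) := by
    rw [Matrix.mul_assoc, mul_apply, dotProduct]
    simp only [U, V, mul_apply, transpose_apply, of_apply, mulVec, dotProduct]
  rw [add_sub_assoc, ← hUV, det_add_mul U V hA, det_fin_two]
  simp only [add_apply, hentry]
  simp [neg_dotProduct]
  ring

end Matrix

theorem exists_tuple_mem_span_eq_top {K V ι : Type*} [Field K] [AddCommGroup V] [Module K V]
    [FiniteDimensional K V] [Fintype ι] {S : Set V} (hspan : Submodule.span K S = ⊤)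
    (hne : S.Nonempty) (hcard : Module.finrank K V ≤ Fintype.card ι) :
    ∃ u : ι → V, (∀ i, u i ∈ S) ∧ Submodule.span K (Set.range u) = ⊤ := by
  obtain ⟨b, hbS, hbspan, hli⟩ := exists_linearIndependent K S
  have := hli.finite
  have := Fintype.ofFinite b
  obtain ⟨e⟩ := Function.Embedding.nonempty_of_card_le (hli.fintype_card_le_finrank.trans hcard)
  obtain ⟨s₀, hs₀⟩ := hne
  refine ⟨Function.extend e Subtype.val fun _ => s₀, fun i => ?_, ?_⟩
  · by_cases h : ∃ y, e y = i
    · obtain ⟨y, rfl⟩ := h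
      rw [e.injective.extend_apply]
      exact hbS y.2
    · rw [Function.extend_apply' _ _ _ h]
      exact hs₀
  · rw [eq_top_iff, ← hspan, ← hbspan]
    exact Submodule.span_mono fun y hy => ⟨e ⟨y, hy⟩, e.injective.extend_apply _ _ _⟩

section DesignMatrix

variable {n ι R : Type*} [CommRing R]

noncomputable def designMatrix (s : Finset ι) (w : ι → R) (v : ι → n → R) : Matrix n n R :=
  ∑ i ∈ s, w i • vecMulVec (v i) (v i)

theorem isSymm_designMatrix (s : Finset ι) (w : ι → R) (v : ι → n → R) :
    (designMatrix s w v).IsSymm := by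
  simp [designMatrix, IsSymm, transpose_sum, transpose_vecMulVec]

theorem designMatrix_update [Fintype ι] [DecidableEq ι] (v : ι → n → R) (i : ι) (x : n → R) :
    designMatrix univ 1 (Function.update v i x)
      = designMatrix univ 1 v + vecMulVec x x - vecMulVec (v i) (v i) := by
  have hcomp : (fun j => vecMulVec (Function.update v i x j) (Function.update v i x j))
      = Function.update (fun j => vecMulVec (v j) (v j)) i (vecMulVec x x) :=
    Function.comp_update (fun u : n → R => vecMulVec u u) v i x
  simp only [designMatrix, Pi.one_apply, one_smul]
  rw [hcomp, sum_update_of_mem (mem_univ i), ← add_sum_erase _ _ (mem_univ i),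
    sdiff_singleton_eq_erase]
  abel

variable [Fintype n] (s : Finset ι) (w : ι → R) (v : ι → n → R)

theorem designMatrix_mulVec (q : n → R) :
    designMatrix s w v *ᵥ q = ∑ i ∈ s, (w i * (v i ⬝ᵥ q)) • v i := by
  simp only [designMatrix, sum_mulVec, smul_mulVec, vecMulVec_mulVec, op_smul_eq_smul, smul_smul]

theorem dotProduct_designMatrix_mulVec (p q : n → R) :
    p ⬝ᵥ (designMatrix s w v *ᵥ q) = ∑ i ∈ s, w i * (p ⬝ᵥ v i) * (v i ⬝ᵥ q) := by
  simp only [designMatrix_mulVec, dotProduct_sum, dotProduct_smul, smul_eq_mul]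
  exact sum_congr rfl fun i _ => by ring

variable [DecidableEq n] {s w v}

theorem dotProduct_designMatrix_inv_mulVec_comm (x y : n → R) :
    x ⬝ᵥ ((designMatrix s w v)⁻¹ *ᵥ y) = y ⬝ᵥ ((designMatrix s w v)⁻¹ *ᵥ x) := by
  rw [Matrix.dotProduct_mulVec, ← mulVec_transpose, (isSymm_designMatrix s w v).inv.eq,
    dotProduct_comm]

theorem sum_mul_dotProduct_designMatrix_inv_mulVec (hA : IsUnit (designMatrix s w v).det)
    (x y : n → R) :
    ∑ i ∈ s, w i * (x ⬝ᵥ ((designMatrix s w v)⁻¹ *ᵥ v i)) * (v i ⬝ᵥ ((designMatrix s w v)⁻¹ *ᵥ y))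
      = x ⬝ᵥ ((designMatrix s w v)⁻¹ *ᵥ y) := by
  simp only [Matrix.dotProduct_mulVec x]
  rw [← dotProduct_designMatrix_mulVec, mulVec_mulVec, mul_nonsing_inv _ hA, one_mulVec]

theorem sum_mul_dotProduct_designMatrix_inv_mulVec_self (hA : IsUnit (designMatrix s w v).det) :
    ∑ i ∈ s, w i * (v i ⬝ᵥ ((designMatrix s w v)⁻¹ *ᵥ v i)) = Fintype.card n := by
  have htrace (i : ι) : w i * (v i ⬝ᵥ ((designMatrix s w v)⁻¹ *ᵥ v i))
      = trace ((designMatrix s w v)⁻¹ * (w i • vecMulVec (v i) (v i))) := by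
    rw [mul_smul_comm, trace_smul, mul_vecMulVec, trace_vecMulVec, dotProduct_comm, smul_eq_mul]
  rw [sum_congr rfl fun i _ => htrace i, ← trace_sum, ← Matrix.mul_sum]
  exact (congrArg trace (nonsing_inv_mul _ hA)).trans trace_one

end DesignMatrix

theorem posDef_designMatrix {n ι : Type*} [Fintype n] {s : Finset ι} {w : ι → ℝ}
    {v : ι → n → ℝ} (hw : ∀ i ∈ s, 0 < w i) (hspan : Submodule.span ℝ (v '' s) = ⊤) :
    (designMatrix s w v).PosDef := by
  refine posDef_iff_dotProduct_mulVec.mpr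
    ⟨isHermitian_iff_isSymm.mpr (isSymm_designMatrix s w v), fun x hx => ?_⟩
  rw [star_trivial, dotProduct_designMatrix_mulVec]
  have hsq (i : ι) : w i * (x ⬝ᵥ v i) * (v i ⬝ᵥ x) = w i * (x ⬝ᵥ v i) ^ 2 := by
    rw [dotProduct_comm (v i)]
    ring
  simp only [hsq]
  obtain ⟨i, hi, hxi⟩ : ∃ i ∈ s, x ⬝ᵥ v i ≠ 0 := by
    by_contra! h
    have hzero : dotProductBilin ℝ ℝ x = 0 :=
      LinearMap.ext_on hspan (by rintro _ ⟨i, hi, rfl⟩; exact h i hi)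
    exact hx (dotProduct_self_eq_zero.mp (LinearMap.congr_fun hzero x))
  exact sum_pos' (fun j hj => mul_nonneg (hw j hj).le (sq_nonneg _))
    ⟨i, hi, mul_pos (hw i hi) (by positivity)⟩

section Exchange

variable {n ι : Type*} [Fintype n] [DecidableEq n] [Fintype ι]

theorem continuous_det_designMatrix :
    Continuous fun u : ι → n → ℝ => (designMatrix univ 1 u).det := by
  unfold designMatrix
  fun_prop

theorem card_sub_card_add_one_mul_le_of_det_update_le [DecidableEq ι] {v : ι → n → ℝ}
    (hpos : 0 < (designMatrix univ 1 v).det) {x : n → ℝ}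
    (hx : ∀ i, (designMatrix univ 1 (Function.update v i x)).det ≤ (designMatrix univ 1 v).det) :
    ((Fintype.card ι : ℝ) - Fintype.card n + 1) * (x ⬝ᵥ ((designMatrix univ 1 v)⁻¹ *ᵥ x))
      ≤ Fintype.card n := by
  set A := designMatrix univ 1 v
  have hA : IsUnit A.det := hpos.ne'.isUnit
  have hexch (i : ι) : (1 + x ⬝ᵥ (A⁻¹ *ᵥ x)) * (1 - v i ⬝ᵥ (A⁻¹ *ᵥ v i)) +
      (x ⬝ᵥ (A⁻¹ *ᵥ v i)) * (v i ⬝ᵥ (A⁻¹ *ᵥ x)) ≤ 1 := by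
    have h := hx i
    rw [designMatrix_update, det_add_vecMulVec_sub_vecMulVec hA] at h
    exact le_of_mul_le_mul_left (h.trans_eq (mul_one _).symm) hpos
  have hself : ∑ i, v i ⬝ᵥ (A⁻¹ *ᵥ v i) = Fintype.card n := by
    simpa using sum_mul_dotProduct_designMatrix_inv_mulVec_self hA
  have hcross : ∑ i, (x ⬝ᵥ (A⁻¹ *ᵥ v i)) * (v i ⬝ᵥ (A⁻¹ *ᵥ x)) = x ⬝ᵥ (A⁻¹ *ᵥ x) := by
    simpa using sum_mul_dotProduct_designMatrix_inv_mulVec hA x x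
  have hsum := sum_le_sum fun i (_ : i ∈ univ) => hexch i
  rw [sum_add_distrib, ← mul_sum, sum_sub_distrib, hself, hcross] at hsum
  simp only [sum_const, card_univ, nsmul_eq_mul, mul_one] at hsum
  linear_combination hsum

theorem exists_tuple_det_pos_forall_mul_le [DecidableEq ι] {S : Set (n → ℝ)} (hS : IsCompact S)
    (hspan : Submodule.span ℝ S = ⊤) (hne : S.Nonempty)
    (hcard : Fintype.card n ≤ Fintype.card ι) :
    ∃ v : ι → n → ℝ, (∀ i, v i ∈ S) ∧ 0 < (designMatrix univ 1 v).det ∧ ∀ x ∈ S,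
      ((Fintype.card ι : ℝ) - Fintype.card n + 1) * (x ⬝ᵥ ((designMatrix univ 1 v)⁻¹ *ᵥ x))
        ≤ Fintype.card n := by
  obtain ⟨u, huS, huspan⟩ := exists_tuple_mem_span_eq_top hspan hne
    ((Module.finrank_fintype_fun_eq_card ℝ).trans_le hcard)
  obtain ⟨v, hv, hmax⟩ := (isCompact_univ_pi fun _ : ι => hS).exists_isMaxOn
    ⟨u, fun i _ => huS i⟩ continuous_det_designMatrix.continuousOn
  have hpos : 0 < (designMatrix univ 1 v).det :=
    ((posDef_designMatrix (fun _ _ => one_pos) (by simpa using huspan)).det_pos).trans_le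
      (hmax fun i _ => huS i)
  refine ⟨v, fun i => hv i trivial, hpos, fun x hx => ?_⟩
  exact card_sub_card_add_one_mul_le_of_det_update_le hpos fun i =>
    hmax ((Set.update_mem_pi_iff_of_mem hv).mpr fun _ => hx)

end Exchange

section EmpiricalWeight

variable {ι X : Type*} [Fintype ι] [DecidableEq X]

noncomputable def empiricalWeight (xs : ι → X) (x : X) : ℝ :=
  #{i | xs i = x} / Fintype.card ι

theorem empiricalWeight_pos {xs : ι → X} {x : X} (hx : x ∈ univ.image xs) :
    0 < empiricalWeight xs x := by
  obtain ⟨i, -, rfl⟩ := mem_image.mp hx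
  have : 0 < #{j | xs j = xs i} := card_pos.mpr ⟨i, by simp⟩
  have : 0 < Fintype.card ι := Fintype.card_pos_iff.mpr ⟨i⟩
  unfold empiricalWeight
  positivity

theorem sum_empiricalWeight_smul {M : Type*} [AddCommGroup M] [Module ℝ M] (xs : ι → X)
    (f : X → M) :
    ∑ x ∈ univ.image xs, empiricalWeight xs x • f x = (Fintype.card ι : ℝ)⁻¹ • ∑ i, f (xs i) := by
  rw [sum_comp, smul_sum]
  refine sum_congr rfl fun x _ => ?_
  rw [empiricalWeight, div_eq_inv_mul, mul_smul, Nat.cast_smul_eq_nsmul]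

theorem sum_empiricalWeight [Nonempty ι] (xs : ι → X) :
    ∑ x ∈ univ.image xs, empiricalWeight xs x = 1 := by
  simpa using sum_empiricalWeight_smul xs fun _ => (1 : ℝ)

theorem designMatrix_empiricalWeight {n : Type*} (xs : ι → X) (φ : X → n → ℝ) :
    designMatrix (univ.image xs) (empiricalWeight xs) φ
      = (Fintype.card ι : ℝ)⁻¹ • designMatrix univ 1 (φ ∘ xs) := by
  simpa [designMatrix] using sum_empiricalWeight_smul xs fun x => vecMulVec (φ x) (φ x)

end EmpiricalWeight

theorem exists_design_forall_dotProduct_inv_mulVec_le {X n : Type*} [Nonempty X] [Fintype n]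
    [DecidableEq n] (φ : X → n → ℝ) (hcompact : IsCompact (Set.range φ))
    (hspan : Submodule.span ℝ (Set.range φ) = ⊤) :
    ∃ (T : Finset X) (w : X → ℝ), T.card ≤ 2 * Fintype.card n + 1 ∧ (∀ x ∈ T, 0 < w x) ∧
      ∑ x ∈ T, w x = 1 ∧ IsUnit (designMatrix T w φ).det ∧
      ∀ x, φ x ⬝ᵥ ((designMatrix T w φ)⁻¹ *ᵥ φ x) ≤ 2 * Fintype.card n := by
  classical
  set d := Fintype.card n
  obtain ⟨v, hvS, hpos, hlev⟩ := exists_tuple_det_pos_forall_mul_le (ι := Fin (2 * d + 1))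
    hcompact hspan (Set.range_nonempty φ) (by simp only [Fintype.card_fin]; omega)
  choose xs hxs using hvS
  obtain rfl : v = φ ∘ xs := funext fun i => (hxs i).symm
  set A := designMatrix univ 1 (φ ∘ xs)
  have hm : (0 : ℝ) < 2 * d + 1 := by positivity
  have hG : designMatrix (univ.image xs) (empiricalWeight xs) φ = (2 * d + 1 : ℝ)⁻¹ • A := by
    simpa using designMatrix_empiricalWeight xs φ
  have hGinv : (designMatrix (univ.image xs) (empiricalWeight xs) φ)⁻¹ = (2 * d + 1 : ℝ) • A⁻¹ := by
    rw [hG]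
    refine inv_eq_right_inv ?_
    rw [smul_mul_smul_comm, inv_mul_cancel₀ hm.ne', mul_nonsing_inv _ hpos.ne'.isUnit, one_smul]
  refine ⟨univ.image xs, empiricalWeight xs, card_image_le.trans (by simp), fun x hx =>
    empiricalWeight_pos hx, sum_empiricalWeight xs, ?_, fun x => ?_⟩
  · rw [hG, det_smul]
    exact (mul_pos (by positivity) hpos).ne'.isUnit
  · have h := hlev (φ x) (Set.mem_range_self x)
    simp only [Fintype.card_fin, Nat.cast_add, Nat.cast_mul, Nat.cast_ofNat, Nat.cast_one] at h
    rw [hGinv, smul_mulVec, dotProduct_smul, smul_eq_mul]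
    nlinarith

section LeastSquares

variable {X n : Type*} [Fintype n] [DecidableEq n] {T : Finset X} {w : X → ℝ} {φ : X → n → ℝ}

theorem dotProduct_designMatrix_inv_mulVec_sum_eq (hG : IsUnit (designMatrix T w φ).det)
    (r : X → ℝ) (θ z : n → ℝ) :
    z ⬝ᵥ ((designMatrix T w φ)⁻¹ *ᵥ ∑ y ∈ T, (w y * r y) • φ y) = z ⬝ᵥ θ +
      ∑ y ∈ T, w y * (r y - φ y ⬝ᵥ θ) * (z ⬝ᵥ ((designMatrix T w φ)⁻¹ *ᵥ φ y)) := by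
  have hsplit : ∑ y ∈ T, (w y * r y) • φ y
      = designMatrix T w φ *ᵥ θ + ∑ y ∈ T, (w y * (r y - φ y ⬝ᵥ θ)) • φ y := by
    rw [designMatrix_mulVec, ← sum_add_distrib]
    exact sum_congr rfl fun y _ => by rw [← add_smul]; ring_nf
  rw [hsplit, mulVec_add, mulVec_mulVec, nonsing_inv_mul _ hG, one_mulVec, dotProduct_add,
    mulVec_sum, dotProduct_sum]
  simp only [mulVec_smul, dotProduct_smul, smul_eq_mul]

theorem sum_mul_abs_dotProduct_designMatrix_inv_mulVec_le (hw : ∀ x ∈ T, 0 ≤ w x)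
    (hw1 : ∑ x ∈ T, w x = 1) (hG : IsUnit (designMatrix T w φ).det) (z : n → ℝ) :
    ∑ y ∈ T, w y * |z ⬝ᵥ ((designMatrix T w φ)⁻¹ *ᵥ φ y)|
      ≤ √(z ⬝ᵥ ((designMatrix T w φ)⁻¹ *ᵥ z)) := by
  refine (le_abs_self _).trans (Real.abs_le_sqrt ?_)
  calc (∑ y ∈ T, w y * |z ⬝ᵥ ((designMatrix T w φ)⁻¹ *ᵥ φ y)|) ^ 2
      ≤ ∑ y ∈ T, w y * |z ⬝ᵥ ((designMatrix T w φ)⁻¹ *ᵥ φ y)| ^ 2 :=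
        Real.pow_arith_mean_le_arith_mean_pow T _ _ hw hw1 (fun _ _ => abs_nonneg _) 2
    _ = ∑ y ∈ T, w y * (z ⬝ᵥ ((designMatrix T w φ)⁻¹ *ᵥ φ y))
          * (φ y ⬝ᵥ ((designMatrix T w φ)⁻¹ *ᵥ z)) := by
        refine sum_congr rfl fun y _ => ?_
        rw [sq_abs, dotProduct_designMatrix_inv_mulVec_comm (φ y)]
        ring
    _ = z ⬝ᵥ ((designMatrix T w φ)⁻¹ *ᵥ z) := sum_mul_dotProduct_designMatrix_inv_mulVec hG z z

theorem abs_dotProduct_leastSquares_sub_le (hw : ∀ x ∈ T, 0 ≤ w x) (hw1 : ∑ x ∈ T, w x = 1)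
    (hG : IsUnit (designMatrix T w φ).det) {ε δ : ℝ} {θ : n → ℝ} {μ r : X → ℝ}
    (hμ : ∀ x, |μ x - φ x ⬝ᵥ θ| ≤ ε) (hr : ∀ x ∈ T, |r x - μ x| ≤ δ) (x : X) :
    |φ x ⬝ᵥ ((designMatrix T w φ)⁻¹ *ᵥ ∑ y ∈ T, (w y * r y) • φ y) - μ x|
      ≤ ε + (ε + δ) * √(φ x ⬝ᵥ ((designMatrix T w φ)⁻¹ *ᵥ φ x)) := by
  set a := fun y => φ x ⬝ᵥ ((designMatrix T w φ)⁻¹ *ᵥ φ y)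
  have hres (y) (hy : y ∈ T) : |r y - φ y ⬝ᵥ θ| ≤ ε + δ := by
    calc |r y - φ y ⬝ᵥ θ| = |(r y - μ y) + (μ y - φ y ⬝ᵥ θ)| := by ring_nf
      _ ≤ δ + ε := (abs_add_le _ _).trans (add_le_add (hr y hy) (hμ y))
      _ = ε + δ := add_comm _ _
  obtain ⟨y₀, hy₀⟩ := nonempty_of_sum_ne_zero (hw1.trans_ne one_ne_zero)
  have hεδ : 0 ≤ ε + δ := (abs_nonneg _).trans (hres y₀ hy₀)
  rw [dotProduct_designMatrix_inv_mulVec_sum_eq hG r θ]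
  calc |φ x ⬝ᵥ θ + ∑ y ∈ T, w y * (r y - φ y ⬝ᵥ θ) * a y - μ x|
      ≤ |φ x ⬝ᵥ θ - μ x| + ∑ y ∈ T, |w y * (r y - φ y ⬝ᵥ θ) * a y| := by
        rw [add_sub_right_comm]
        exact (abs_add_le _ _).trans (add_le_add le_rfl (abs_sum_le_sum_abs _ _))
    _ ≤ ε + ∑ y ∈ T, (ε + δ) * (w y * |a y|) := by
        refine add_le_add (abs_sub_comm (μ x) _ ▸ hμ x) (sum_le_sum fun y hy => ?_)
        have hwy := hw y hy
        calc |w y * (r y - φ y ⬝ᵥ θ) * a y| = w y * |r y - φ y ⬝ᵥ θ| * |a y| := by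
              rw [abs_mul, abs_mul, abs_of_nonneg hwy]
          _ ≤ w y * (ε + δ) * |a y| := by gcongr; exact hres y hy
          _ = (ε + δ) * (w y * |a y|) := by ring
    _ ≤ ε + (ε + δ) * √(φ x ⬝ᵥ ((designMatrix T w φ)⁻¹ *ᵥ φ x)) := by
        rw [← mul_sum]
        gcongr
        exact sum_mul_abs_dotProduct_designMatrix_inv_mulVec_le hw hw1 hG (φ x)

end LeastSquares

theorem two_mul_add_one_le_four_mul_log_log_add_sixteen (d : ℕ) :
    (2 * d + 1 : ℝ) ≤ 4 * d * Real.log (Real.log d) + 16 := by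
  rcases lt_or_ge d 3 with hd | hd
  · interval_cases d
    · norm_num
    · norm_num
    · have h2 := Real.log_two_gt_d9
      have := Real.one_sub_inv_le_log_of_pos (by linarith : 0 < Real.log 2)
      have : (Real.log 2)⁻¹ < 2 := by rw [inv_lt_comm₀ (by linarith) two_pos]; linarith
      push_cast
      linarith
  have hd' : (3 : ℝ) ≤ d := by exact_mod_cast hd
  have hlog : 1 ≤ Real.log d := by
    rw [Real.le_log_iff_exp_le (by linarith)]
    linarith [Real.exp_one_lt_d9]
  rcases lt_or_ge d 8 with hd8 | hd8
  · have : (d : ℝ) ≤ 7 := by exact_mod_cast Nat.le_of_lt_succ hd8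
    nlinarith [Real.log_nonneg hlog]
  · have hd8' : (8 : ℝ) ≤ d := by exact_mod_cast hd8
    have hlog2 : 2 ≤ Real.log d := by
      rw [Real.le_log_iff_exp_le (by linarith), show (2 : ℝ) = 1 + 1 by norm_num, Real.exp_add]
      nlinarith [Real.exp_one_lt_d9, Real.exp_pos 1]
    have := Real.log_le_log two_pos hlog2
    nlinarith [Real.log_two_gt_d9]

theorem stmt_13_general {X : Type*} [Nonempty X] (d : ℕ)
    (φ : X → Fin d → ℝ)
    (hcompact : IsCompact (Set.range φ))
    (hspan : Submodule.span ℝ (Set.range φ) = ⊤) :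
    ∃ (T : Finset X) (w : X → ℝ),
      (T.card : ℝ) ≤ 4 * d * Real.log (Real.log d) + 16 ∧
      (∀ x ∈ T, 0 < w x) ∧
      (∑ x ∈ T, w x) = 1 ∧
      IsUnit (∑ x ∈ T, w x • vecMulVec (φ x) (φ x)) ∧
      ∀ ε δ : ℝ, 0 ≤ ε → 0 ≤ δ → ∀ (θstar : Fin d → ℝ) (μ r : X → ℝ),
        (∀ x, |μ x - φ x ⬝ᵥ θstar| ≤ ε) →
        (∀ x ∈ T, |r x - μ x| ≤ δ) →
        ∀ x, |φ x ⬝ᵥ ((∑ y ∈ T, w y • vecMulVec (φ y) (φ y))⁻¹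
                  *ᵥ (∑ y ∈ T, (w y * r y) • φ y)) - μ x|
          ≤ ε + (ε + δ) * Real.sqrt (2 * d) := by
  obtain ⟨T, w, hcard, hw, hw1, hG, hlev⟩ :=
    exists_design_forall_dotProduct_inv_mulVec_le φ hcompact hspan
  rw [Fintype.card_fin] at hcard hlev
  refine ⟨T, w, ?_, hw, hw1, (isUnit_iff_isUnit_det _).mpr hG, ?_⟩
  · exact (show (T.card : ℝ) ≤ 2 * d + 1 by exact_mod_cast hcard).trans
      (two_mul_add_one_le_four_mul_log_log_add_sixteen d)
  · intro ε δ hε hδ θstar μ r hμ hr x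
    calc _ ≤ ε + (ε + δ) * √(φ x ⬝ᵥ ((designMatrix T w φ)⁻¹ *ᵥ φ x)) :=
          abs_dotProduct_leastSquares_sub_le (fun y hy => (hw y hy).le) hw1 hG hμ hr x
      _ ≤ ε + (ε + δ) * √(2 * d) := by gcongr; exact hlev x

/-- Near-optimal (G-optimal) experimental design and least-squares estimation: if the image
of the feature map `φ : X → ℝ^d` is compact and spans `ℝ^d`, there is a finitely supported
probability distribution (support `T`, weights `w`) with at most `4d·log(log d) + 16`
support points whose design matrix `G = Σ_{x∈T} w x • φ x φ xᵀ` is invertible, such that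
for any `ε`-realizable `μ` (witnessed by `θ⋆`) and any `r` with `|r − μ| ≤ δ` on `T`, the
least-squares estimator `θ̂ = G⁻¹ (Σ_{x∈T} w x · r x • φ x)` satisfies
`|⟨φ x, θ̂⟩ − μ x| ≤ ε + (ε + δ)·√(2d)` for all `x ∈ X`. -/
theorem stmt_13 {X : Type*} [Nonempty X] (d : ℕ) (hd : 1 ≤ d)
    (φ : X → Fin d → ℝ)
    (hcompact : IsCompact (Set.range φ))
    (hspan : Submodule.span ℝ (Set.range φ) = ⊤) :
    ∃ (T : Finset X) (w : X → ℝ),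
      (T.card : ℝ) ≤ 4 * d * Real.log (Real.log d) + 16 ∧
      (∀ x ∈ T, 0 < w x) ∧
      (∑ x ∈ T, w x) = 1 ∧
      IsUnit (∑ x ∈ T, w x • vecMulVec (φ x) (φ x)) ∧
      ∀ ε δ : ℝ, 0 ≤ ε → 0 ≤ δ → ∀ (θstar : Fin d → ℝ) (μ r : X → ℝ),
        (∀ x, |μ x - φ x ⬝ᵥ θstar| ≤ ε) →
        (∀ x ∈ T, |r x - μ x| ≤ δ) →
        ∀ x, |φ x ⬝ᵥ ((∑ y ∈ T, w y • vecMulVec (φ y) (φ y))⁻¹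
                  *ᵥ (∑ y ∈ T, (w y * r y) • φ y)) - μ x|
          ≤ ε + (ε + δ) * Real.sqrt (2 * d) :=
  stmt_13_general d φ hcompact hspan
end

section
/- Consider a finite-horizon MDP with horizon H. Let f_h : S × A → ℝ, h ∈ {1,…,H}, be arbitrary bounded measurable functions, and let π be the memoryless deterministic policy that at each stage h selects an action π_h(s) ∈ argmax_{a∈A} f_h(s,a) (measurably). Then max_{h∈[H]} sup_{s∈S} |v⋆_h(s) − v^π_h(s)| ≤ 2·Σ_{h=1}^{H} sup_{(s,a)∈S×A} |q⋆_h(s,a) − f_h(s,a)|. -/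
open MeasureTheory ProbabilityTheory

/-- Greedy-policy error bound (finite-horizon analogue of Singh–Yee): if `π` is greedy with
respect to bounded measurable functions `f_h` and `E h` bounds the sup-norm error
`|q⋆_h − f_h|`, then `|v⋆_h(s) − v^π_h(s)| ≤ 2·Σ_{h'=1}^{H} E h'` for every stage `h` and
state `s`. -/
theorem stmt_15 {S : Type*} [MeasurableSpace S]
    {A : Type*} [Fintype A] [Nonempty A] [MeasurableSpace A] [MeasurableSingletonClass A]
    (H : ℕ) (hH : 1 ≤ H)
    (P : A → Kernel S S) (hP : ∀ a, IsMarkovKernel (P a))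
    (r : S → A → ℝ) (hrmeas : ∀ a, Measurable fun s => r s a)
    (hr0 : ∀ s a, 0 ≤ r s a) (hr1 : ∀ s a, r s a ≤ 1)
    -- optimal value functions, defined by backward recursion
    (vstar : ℕ → S → ℝ) (qstar : ℕ → S → A → ℝ)
    (hvend : ∀ s, vstar (H + 1) s = 0)
    (hq : ∀ h, 1 ≤ h → h ≤ H → ∀ s a,
      qstar h s a = r s a + ∫ s', vstar (h + 1) s' ∂(P a s))
    (hv : ∀ h, 1 ≤ h → h ≤ H → ∀ s,
      vstar h s = Finset.univ.sup' Finset.univ_nonempty fun a => qstar h s a)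
    -- bounded measurable functions `f_h` and their sup-norm errors
    (f : ℕ → S → A → ℝ)
    (hfmeas : ∀ h a, Measurable fun s => f h s a)
    (hfbdd : ∀ h, ∃ C : ℝ, ∀ s a, |f h s a| ≤ C)
    (E : ℕ → ℝ)
    (hE : ∀ h, 1 ≤ h → h ≤ H → ∀ s a, |qstar h s a - f h s a| ≤ E h)
    -- the deterministic memoryless policy that is greedy with respect to `f`
    (π : ℕ → S → A) (hπmeas : ∀ h, Measurable (π h))
    (hgreedy : ∀ h, 1 ≤ h → h ≤ H → ∀ s a, f h s a ≤ f h s (π h s))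
    -- the value functions of `π`
    (vpi : ℕ → S → ℝ)
    (hvpiend : ∀ s, vpi (H + 1) s = 0)
    (hvpi : ∀ h, 1 ≤ h → h ≤ H → ∀ s,
      vpi h s = r s (π h s) + ∫ s', vpi (h + 1) s' ∂(P (π h s) s)) :
    ∀ h, 1 ≤ h → h ≤ H → ∀ s,
      |vstar h s - vpi h s| ≤ 2 * ∑ h' ∈ Finset.Icc 1 H, E h' := by
  classical
  haveI := hP
  -- measurability of kernel integrals of bounded measurable functions
  have kint : ∀ (g : S → ℝ), Measurable g → ∀ a : A,
      Measurable fun s => ∫ s', g s' ∂(P a s) := by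
    intro g hg a
    have : StronglyMeasurable (Function.uncurry fun (_ : S) (s' : S) => g s') :=
      (hg.comp measurable_snd).stronglyMeasurable
    exact (this.integral_kernel_prod_right (κ := P a)).measurable
  have integ : ∀ (g : S → ℝ) (C : ℝ), Measurable g → (∀ s, |g s| ≤ C) →
      ∀ (a : A) (s : S), Integrable g (P a s) := by
    intro g C hg hb a s
    exact (integrable_const C).mono' hg.aestronglyMeasurable
      (Filter.Eventually.of_forall fun s' => by simpa using hb s')
  have intbd : ∀ (g : S → ℝ) (C : ℝ), Measurable g → (∀ s, |g s| ≤ C) →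
      ∀ (a : A) (s : S), |∫ s', g s' ∂(P a s)| ≤ C := by
    intro g C hg hb a s
    have := norm_integral_le_of_norm_le_const (μ := P a s) (f := g) (C := C)
      (Filter.Eventually.of_forall fun s' => by simpa using hb s')
    simpa using this
  -- main backward induction
  have key : ∀ n : ℕ, ∀ h : ℕ, h + n = H + 1 → 1 ≤ h →
      Measurable (vstar h) ∧ Measurable (vpi h) ∧
      (∀ s, |vstar h s| ≤ (n : ℝ)) ∧ (∀ s, |vpi h s| ≤ (n : ℝ)) ∧
      (∀ s, |vstar h s - vpi h s| ≤ 2 * ∑ h' ∈ Finset.Icc h H, E h') := by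
    intro n
    induction n with
    | zero =>
      intro h hn _
      simp only [Nat.add_zero] at hn
      subst hn
      refine ⟨?_, ?_, ?_, ?_, ?_⟩
      · simpa [funext hvend] using (measurable_const : Measurable fun _ : S => (0:ℝ))
      · simpa [funext hvpiend] using (measurable_const : Measurable fun _ : S => (0:ℝ))
      · intro s; simp [hvend]
      · intro s; simp [hvpiend]
      · intro s
        rw [Finset.Icc_eq_empty (by omega)]
        simp [hvend, hvpiend]
    | succ n ih =>
      intro h hn hh1
      have hhH : h ≤ H := by omega
      obtain ⟨Mstar, Mpi, Bstar, Bpi, D⟩ := ih (h + 1) (by omega) (by omega)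
      -- measurability of each q_h(·, a)
      have Mq : ∀ a : A, Measurable fun s => qstar h s a := by
        intro a
        have : (fun s => qstar h s a)
            = fun s => r s a + ∫ s', vstar (h + 1) s' ∂(P a s) := by
          funext s; exact hq h hh1 hhH s a
        rw [this]
        exact (hrmeas a).add (kint _ Mstar a)
      -- bound on q
      have Bq : ∀ (s : S) (a : A), |qstar h s a| ≤ (n : ℝ) + 1 := by
        intro s a
        rw [hq h hh1 hhH s a]
        have h1 : |r s a| ≤ 1 := abs_le.2 ⟨by linarith [hr0 s a], hr1 s a⟩
        have h2 : |∫ s', vstar (h + 1) s' ∂(P a s)| ≤ (n : ℝ) :=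
          intbd _ _ Mstar Bstar a s
        calc |r s a + ∫ s', vstar (h + 1) s' ∂(P a s)|
            ≤ |r s a| + |∫ s', vstar (h + 1) s' ∂(P a s)| := abs_add_le _ _
          _ ≤ (n : ℝ) + 1 := by linarith
      refine ⟨?_, ?_, ?_, ?_, ?_⟩
      · -- measurability of vstar h
        have : vstar h = Finset.univ.sup' Finset.univ_nonempty
            (fun a (s : S) => qstar h s a) := by
          funext s
          rw [hv h hh1 hhH s, Finset.sup'_apply]
        rw [this]
        exact Finset.measurable_sup' _ (fun a _ => Mq a)
      · -- measurability of vpi h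
        have hrep : vpi h = fun s => ∑ a : A, if π h s = a then
            (r s a + ∫ s', vpi (h + 1) s' ∂(P a s)) else 0 := by
          funext s
          rw [hvpi h hh1 hhH s]
          rw [Finset.sum_ite_eq Finset.univ (π h s)
            (fun a => r s a + ∫ s', vpi (h + 1) s' ∂(P a s))]
          simp
        rw [hrep]
        refine Finset.measurable_sum _ fun a _ => Measurable.ite ?_ ?_ measurable_const
        · exact (hπmeas h) (measurableSet_singleton a)
        · exact (hrmeas a).add (kint _ Mpi a)
      · -- bound on vstar h
        intro s
        rw [hv h hh1 hhH s]
        rw [abs_le]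
        constructor
        · obtain ⟨a₀⟩ := (inferInstance : Nonempty A)
          have := Finset.le_sup' (fun a => qstar h s a) (Finset.mem_univ a₀)
          have hb := abs_le.1 (Bq s a₀)
          push_cast
          linarith [hb.1]
        · push_cast
          exact Finset.sup'_le _ _ fun a _ => (abs_le.1 (Bq s a)).2
      · -- bound on vpi h
        intro s
        rw [hvpi h hh1 hhH s]
        have h1 : |r s (π h s)| ≤ 1 := abs_le.2 ⟨by linarith [hr0 s (π h s)], hr1 s (π h s)⟩
        have h2 : |∫ s', vpi (h + 1) s' ∂(P (π h s) s)| ≤ (n : ℝ) :=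
          intbd _ _ Mpi Bpi _ s
        calc |r s (π h s) + ∫ s', vpi (h + 1) s' ∂(P (π h s) s)|
            ≤ |r s (π h s)| + |∫ s', vpi (h + 1) s' ∂(P (π h s) s)| := abs_add_le _ _
          _ ≤ (n : ℝ) + 1 := by linarith
          _ = ((n + 1 : ℕ) : ℝ) := by push_cast; ring
      · -- the error bound
        intro s
        set b := π h s with hb
        set T := ∑ h' ∈ Finset.Icc (h + 1) H, E h' with hT
        have hsplit : ∑ h' ∈ Finset.Icc h H, E h' = E h + T := by
          rw [hT, ← Finset.sum_Ioc_add_eq_sum_Icc hhH, ← Finset.Icc_add_one_left_eq_Ioc]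
          ring
        -- integral difference bound
        have hidiff : ∀ a : A, |(∫ s', vstar (h+1) s' ∂(P a s)) -
            ∫ s', vpi (h+1) s' ∂(P a s)| ≤ 2 * T := by
          intro a
          rw [← integral_sub (integ _ _ Mstar Bstar a s) (integ _ _ Mpi Bpi a s)]
          exact intbd _ (2 * T) (Mstar.sub Mpi) D a s
        have hqvpi : |qstar h s b - vpi h s| ≤ 2 * T := by
          rw [hq h hh1 hhH s b, hvpi h hh1 hhH s]
          have := hidiff b
          rw [← hb]
          calc |(r s b + ∫ s', vstar (h+1) s' ∂(P b s)) -
              (r s b + ∫ s', vpi (h+1) s' ∂(P b s))|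
              = |(∫ s', vstar (h+1) s' ∂(P b s)) - ∫ s', vpi (h+1) s' ∂(P b s)| := by
                ring_nf
            _ ≤ 2 * T := this
        -- q_h(s, b) is near-optimal
        have hopt : ∀ a : A, qstar h s a ≤ qstar h s b + 2 * E h := by
          intro a
          have h1 := abs_le.1 (hE h hh1 hhH s a)
          have h2 := abs_le.1 (hE h hh1 hhH s b)
          have h3 := hgreedy h hh1 hhH s a
          rw [← hb] at h3
          linarith [h1.1, h1.2, h2.1, h2.2]
        have hvle : vstar h s ≤ qstar h s b + 2 * E h := by
          rw [hv h hh1 hhH s]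
          exact Finset.sup'_le _ _ fun a _ => hopt a
        have hvge : qstar h s b ≤ vstar h s := by
          rw [hv h hh1 hhH s]
          exact Finset.le_sup' _ (Finset.mem_univ b)
        have hEpos : 0 ≤ E h := le_trans (abs_nonneg _) (hE h hh1 hhH s b)
        have hd := abs_le.1 hqvpi
        rw [abs_le]
        constructor
        · rw [hsplit]; linarith [hd.1, hd.2]
        · rw [hsplit]; linarith [hd.1, hd.2]
  intro h hh1 hhH s
  obtain ⟨_, _, _, _, D⟩ := key (H + 1 - h) h (by omega) hh1
  refine le_trans (D s) ?_
  have hEpos : ∀ h' ∈ Finset.Icc 1 H, 0 ≤ E h' := by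
    intro h' hh'
    rw [Finset.mem_Icc] at hh'
    obtain ⟨a⟩ := (inferInstance : Nonempty A)
    exact le_trans (abs_nonneg _) (hE h' hh'.1 hh'.2 s a)
  have hsub : Finset.Icc h H ⊆ Finset.Icc 1 H := by
    intro x hx
    rw [Finset.mem_Icc] at hx ⊢
    omega
  have := Finset.sum_le_sum_of_subset_of_nonneg hsub
    (fun i hi _ => hEpos i hi)
  linarith
end

section
/- Let α ∈ [2/3, 1), γ ∈ (0, 1/4], x = (1−γ)/(2γ), H ≥ 1 an integer, ε = (1/3)·x^{−H}, and for h ∈ {1,…,H} let c_h = 1/2 + ((1+γ)/2)·Σ_{l=1}^{H−h} x^l. Then for every h ∈ {1,…,H}: ε·α^{1−h}·c_h < 1/2 and ε·α^{1−h}·x^{H−h+1} < 1/2; consequently, for all σ ∈ [0,1] and all t with |t| ≤ 1, ε·α^{1−h}·(c_h + x^{H−h+1}·σ·t) < 1. -/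
/-- Reward boundedness in the discounted version of the lower-bound construction: with
`α ∈ [2/3, 1)`, `γ ∈ (0, 1/4]`, `x = (1−γ)/(2γ)`, `ε = (1/3)·x^{−H}` and
`c_h = 1/2 + ((1+γ)/2)·Σ_{l=1}^{H−h} x^l`, for every stage `h ∈ {1,…,H}` both
`ε·α^{1−h}·c_h < 1/2` and `ε·α^{1−h}·x^{H−h+1} < 1/2`; consequently, for `σ ∈ [0,1]` and
`|t| ≤ 1`, `ε·α^{1−h}·(c_h + x^{H−h+1}·σ·t) < 1`. -/
theorem stmt_16 (α γ : ℝ) (hα1 : 2 / 3 ≤ α) (hα2 : α < 1)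
    (hγ0 : 0 < γ) (hγ14 : γ ≤ 1 / 4)
    (x : ℝ) (hx : x = (1 - γ) / (2 * γ))
    (H : ℕ) (hH : 1 ≤ H)
    (ε : ℝ) (hε : ε = 1 / 3 * x ^ (-(H : ℤ)))
    (c : ℕ → ℝ)
    (hc : ∀ h, 1 ≤ h → h ≤ H →
      c h = 1 / 2 + (1 + γ) / 2 * ∑ l ∈ Finset.Icc 1 (H - h), x ^ l) :
    ∀ h, 1 ≤ h → h ≤ H →
      ε * α ^ (1 - (h : ℤ)) * c h < 1 / 2 ∧
      ε * α ^ (1 - (h : ℤ)) * x ^ (H - h + 1) < 1 / 2 ∧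
      ∀ σ t : ℝ, 0 ≤ σ → σ ≤ 1 → |t| ≤ 1 →
        ε * α ^ (1 - (h : ℤ)) * (c h + x ^ (H - h + 1) * σ * t) < 1 := by
  have hα0 : (0:ℝ) < α := by linarith
  have hγx : 2 * γ * x = 1 - γ := by
    rw [hx]; field_simp
  have hx32 : (3:ℝ)/2 ≤ x := by nlinarith
  have hx0 : (0:ℝ) < x := by linarith
  intro h h1 hhH
  have hA0 : (0:ℝ) < α ^ (1 - (h:ℤ)) := zpow_pos hα0 _
  have hε0 : 0 < ε := by
    rw [hε]; positivity
  -- α ^ (1 - h) ≤ x ^ (h - 1)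
  have hAle : α ^ (1 - (h:ℤ)) ≤ x ^ (h - 1) := by
    have hexp : (1 - (h:ℤ)) = -((h - 1 : ℕ) : ℤ) := by push_cast; omega
    rw [hexp, zpow_neg, zpow_natCast, ← inv_pow]
    have hinv : α⁻¹ ≤ x := by
      have : α⁻¹ ≤ 3/2 := by
        rw [inv_le_comm₀ hα0 (by norm_num)]; linarith
      linarith
    exact pow_le_pow_left₀ (by positivity) hinv _
  -- the key product bound
  have hεfrm : ε = 1/3 * (x ^ H)⁻¹ := by
    rw [hε, zpow_neg, zpow_natCast]
  have hpow : x ^ (h - 1) * x ^ (H - h + 1) = x ^ H := by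
    rw [← pow_add]; congr 1; omega
  have hXpos : (0:ℝ) < x ^ (H - h + 1) := by positivity
  have key : ε * α ^ (1 - (h:ℤ)) * x ^ (H - h + 1) ≤ 1/3 := by
    have step : ε * α ^ (1 - (h:ℤ)) * x ^ (H - h + 1)
        ≤ ε * x ^ (h - 1) * x ^ (H - h + 1) := by
      apply mul_le_mul_of_nonneg_right _ (le_of_lt hXpos)
      exact mul_le_mul_of_nonneg_left hAle (le_of_lt hε0)
    have heq : ε * x ^ (h - 1) * x ^ (H - h + 1) = 1/3 := by
      rw [hεfrm]
      have : 1/3 * (x ^ H)⁻¹ * x ^ (h - 1) * x ^ (H - h + 1)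
          = 1/3 * ((x ^ H)⁻¹ * (x ^ (h - 1) * x ^ (H - h + 1))) := by ring
      rw [this, hpow, inv_mul_cancel₀ (by positivity), mul_one]
    linarith
  -- bound on c h
  have hch : c h < 3/2 * x ^ (H - h + 1) := by
    rw [hc h h1 hhH]
    have hsum : ∑ l ∈ Finset.Icc 1 (H - h), x ^ l
        = (x ^ (H - h + 1) - x ^ 1) / (x - 1) := by
      have : Finset.Icc 1 (H - h) = Finset.Ico 1 (H - h + 1) := by
        rw [Finset.Ico_add_one_right_eq_Icc]
      rw [this, geom_sum_Ico (by intro hx1; rw [hx1] at hx32; norm_num at hx32)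
        (by omega)]
    rw [hsum, pow_one]
    set P := x ^ (H - h + 1) with hP
    have hPx : x ≤ P := by
      calc x = x ^ 1 := (pow_one x).symm
        _ ≤ P := pow_le_pow_right₀ (by linarith) (by omega)
    have hx1 : (0:ℝ) < x - 1 := by linarith
    have hcoef : (1 + γ) / 2 ≤ 5/4 * (x - 1) := by nlinarith
    have hb : (1 + γ) / 2 * ((P - x) / (x - 1)) ≤ 5/4 * (P - x) := by
      rw [mul_div_assoc', div_le_iff₀ hx1]
      nlinarith
    have hPpos : (0:ℝ) < P := hXpos
    nlinarith
  have hεA : 0 < ε * α ^ (1 - (h:ℤ)) := mul_pos hε0 hA0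
  have g1 : ε * α ^ (1 - (h:ℤ)) * c h < 1/2 := by
    calc ε * α ^ (1 - (h:ℤ)) * c h
        < ε * α ^ (1 - (h:ℤ)) * (3/2 * x ^ (H - h + 1)) :=
          (mul_lt_mul_iff_right₀ hεA).mpr hch
      _ = 3/2 * (ε * α ^ (1 - (h:ℤ)) * x ^ (H - h + 1)) := by ring
      _ ≤ 3/2 * (1/3) := by linarith
      _ = 1/2 := by norm_num
  have g2 : ε * α ^ (1 - (h:ℤ)) * x ^ (H - h + 1) < 1/2 := by linarith
  refine ⟨g1, g2, ?_⟩
  intro σ t hσ0 hσ1 ht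
  have hst : |σ * t| ≤ 1 := by
    rw [abs_mul, abs_of_nonneg hσ0]
    calc σ * |t| ≤ 1 * 1 := by
          apply mul_le_mul hσ1 ht (abs_nonneg t) (by norm_num)
      _ = 1 := by norm_num
  obtain ⟨hst1, hst2⟩ := abs_le.mp hst
  have hEX : 0 < ε * α ^ (1 - (h:ℤ)) * x ^ (H - h + 1) := mul_pos hεA hXpos
  have expand : ε * α ^ (1 - (h:ℤ)) * (c h + x ^ (H - h + 1) * σ * t)
      = ε * α ^ (1 - (h:ℤ)) * c h
        + (ε * α ^ (1 - (h:ℤ)) * x ^ (H - h + 1)) * (σ * t) := by ring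
  rw [expand]
  nlinarith
end
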